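/- arXiv:1107.0278 — 7 statements merged into one kernel-verified Lean document; each statement's English description precedes it below -/
import Mathlib

section
/- On a finite set of states S, every playable effectivity function is truly playable. That is, if E : P(N) → P(P(S)) satisfies liveness (∅ ∉ E(G)), safety (S ∈ E(G)), N-maximality (if the complement of X is not in E(∅) then X ∈ E(N)), outcome monotonicity, and superadditivity for disjoint coalitions, and S is finite, then the non-monotonic core of E(∅) (the set of minimal elements of E(∅) under ⊂) is nonempty. -/
/-- On a finite set of states, every playable effectivity function is truly playable:
the non-monotonic core of `E ∅` (minimal elements under strict inclusion) is nonempty. -/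
theorem playable_implies_truly_playable {N S : Type*} [Finite S]
    (E : Set N → Set (Set S))
    (E1 : ∀ G : Set N, (∅ : Set S) ∉ E G)
    (E2 : ∀ G : Set N, (Set.univ : Set S) ∈ E G)
    (E3 : ∀ X : Set S, Xᶜ ∉ E ∅ → X ∈ E Set.univ)
    (E4 : ∀ (G : Set N) (X Y : Set S), X ∈ E G → X ⊆ Y → Y ∈ E G)
    (E5 : ∀ (G₁ G₂ : Set N) (X Y : Set S), G₁ ∩ G₂ = ∅ →
      X ∈ E G₁ → Y ∈ E G₂ → X ∩ Y ∈ E (G₁ ∪ G₂)) :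
    {X | X ∈ E ∅ ∧ ¬ ∃ Y ∈ E ∅, Y ⊂ X}.Nonempty := by
  have : Finite (Set S) := inferInstance
  have hwf : WellFoundedLT (Set S) := Finite.to_wellFoundedLT
  obtain ⟨X, hX, hmin⟩ := hwf.wf.has_min (E ∅) ⟨Set.univ, E2 ∅⟩
  exact ⟨X, hX, fun ⟨Y, hY, hYX⟩ => hmin Y hY hYX⟩
end

section
/- The axiom system CLC (coalition logic with individual and common knowledge) is sound with respect to epistemic coalition models: every formula derivable in CLC is valid in all epistemic coalition models. -/
/-- Formulas of CLC: coalition logic with individual knowledge `Kᵢ` and common knowledge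
`C_G` operators. Coalitions are finite sets of agents. -/
inductive CLCForm (N : Type) [Fintype N] [DecidableEq N] : Type
  | atom : ℕ → CLCForm N
  | bot : CLCForm N
  | imp : CLCForm N → CLCForm N → CLCForm N
  | and : CLCForm N → CLCForm N → CLCForm N
  | coal : Finset N → CLCForm N → CLCForm N
  | know : N → CLCForm N → CLCForm N
  | common : Finset N → CLCForm N → CLCForm N

namespace CLCForm

variable {N : Type} [Fintype N] [DecidableEq N]

def neg (φ : CLCForm N) : CLCForm N := imp φ bot
def top : CLCForm N := neg bot
def iff (φ ψ : CLCForm N) : CLCForm N := and (imp φ ψ) (imp ψ φ)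

/-- `E_G φ`: everybody in `G` knows `φ`, i.e. the conjunction `⋀_{i ∈ G} Kᵢ φ`. -/
noncomputable def ev (G : Finset N) (φ : CLCForm N) : CLCForm N :=
  (G.toList.map (fun i => know i φ)).foldr and top

/-- Propositional evaluation treating modal formulas as atoms. -/
def propEval (v : CLCForm N → Bool) : CLCForm N → Bool
  | atom n => v (atom n)
  | bot => false
  | imp φ ψ => !(propEval v φ) || propEval v ψ
  | and φ ψ => propEval v φ && propEval v ψ
  | coal G φ => v (coal G φ)
  | know i φ => v (know i φ)
  | common G φ => v (common G φ)

/-- The axiom system CLC: CL axioms G1–G5 with MP and RG, S5 axioms K, T, 4, 5 with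
necessitation RN for each `Kᵢ`, the fixpoint axiom C2 and the induction rule RC for
common knowledge (C1 `E_G φ ↔ ⋀_{i∈G} Kᵢ φ` holds by definition of `E_G`). -/
inductive Prov : CLCForm N → Prop
  | taut (φ : CLCForm N) : (∀ v, propEval v φ = true) → Prov φ
  | g1 (G : Finset N) : Prov (neg (coal G bot))
  | g2 (G : Finset N) : Prov (coal G top)
  | g3 (φ : CLCForm N) : Prov (imp (neg (coal ∅ (neg φ))) (coal Finset.univ φ))
  | g4 (G : Finset N) (φ ψ : CLCForm N) : Prov (imp (coal G (and φ ψ)) (coal G ψ))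
  | g5 (G₁ G₂ : Finset N) (φ ψ : CLCForm N) : G₁ ∩ G₂ = ∅ →
      Prov (imp (and (coal G₁ φ) (coal G₂ ψ)) (coal (G₁ ∪ G₂) (and φ ψ)))
  | mp (φ ψ : CLCForm N) : Prov (imp φ ψ) → Prov φ → Prov ψ
  | rg (G : Finset N) (φ ψ : CLCForm N) : Prov (iff φ ψ) →
      Prov (iff (coal G φ) (coal G ψ))
  | axK (i : N) (φ ψ : CLCForm N) :
      Prov (imp (know i (imp φ ψ)) (imp (know i φ) (know i ψ)))
  | axT (i : N) (φ : CLCForm N) : Prov (imp (know i φ) φ)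
  | ax4 (i : N) (φ : CLCForm N) : Prov (imp (know i φ) (know i (know i φ)))
  | ax5 (i : N) (φ : CLCForm N) :
      Prov (imp (neg (know i φ)) (know i (neg (know i φ))))
  | rn (i : N) (φ : CLCForm N) : Prov φ → Prov (know i φ)
  | c2 (G : Finset N) (φ : CLCForm N) :
      Prov (imp (common G φ) (ev G (and φ (common G φ))))
  | rc (G : Finset N) (φ ψ : CLCForm N) : Prov (imp φ (ev G (and φ ψ))) →
      Prov (imp φ (common G ψ))

end CLCForm

/-- Epistemic coalition models: a truly playable effectivity function at each state (E1–E6),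
an epistemic equivalence relation for each agent, and a valuation. -/
structure CLCModel (N : Type) [Fintype N] [DecidableEq N] (S : Type) where
  eff : S → Finset N → Set (Set S)
  rel : N → S → S → Prop
  val : ℕ → Set S
  equiv : ∀ i, Equivalence (rel i)
  e1 : ∀ (s : S) (G : Finset N), (∅ : Set S) ∉ eff s G
  e2 : ∀ (s : S) (G : Finset N), (Set.univ : Set S) ∈ eff s G
  e3 : ∀ (s : S) (X : Set S), Xᶜ ∉ eff s ∅ → X ∈ eff s Finset.univ
  e4 : ∀ (s : S) (G : Finset N) (X Y : Set S), X ∈ eff s G → X ⊆ Y → Y ∈ eff s G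
  e5 : ∀ (s : S) (G₁ G₂ : Finset N) (X Y : Set S), G₁ ∩ G₂ = ∅ →
    X ∈ eff s G₁ → Y ∈ eff s G₂ → X ∩ Y ∈ eff s (G₁ ∪ G₂)
  e6 : ∀ s : S, {X | X ∈ eff s ∅ ∧ ¬ ∃ Y ∈ eff s ∅, Y ⊂ X}.Nonempty

/-- Truth of a CLC formula at a state of an epistemic coalition model. Common knowledge is
interpreted via the transitive closure of the union of the accessibility relations. -/
def CLCSat {N : Type} [Fintype N] [DecidableEq N] {S : Type} (M : CLCModel N S) :
    S → CLCForm N → Prop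
  | s, .atom n => s ∈ M.val n
  | _, .bot => False
  | s, .imp φ ψ => CLCSat M s φ → CLCSat M s ψ
  | s, .and φ ψ => CLCSat M s φ ∧ CLCSat M s ψ
  | s, .coal G φ => {t | CLCSat M t φ} ∈ M.eff s G
  | s, .know i φ => ∀ t, M.rel i s t → CLCSat M t φ
  | s, .common G φ =>
      ∀ t, Relation.TransGen (fun a b => ∃ i ∈ G, M.rel i a b) s t → CLCSat M t φ


/-! The semantic clauses make each axiom a direct transcription of a frame condition: G1–G5 are
E1–E5 read on truth sets, T/4/5 are reflexivity, transitivity and euclideanness of `∼ᵢ`, and C2/RC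
are the unfolding and the induction principle of the transitive closure. Validity in a fixed model
is preserved by MP, RG, RN and RC, so soundness follows by induction on derivations. -/

theorem Relation.TransGen.of_forall_invariant {α : Type*} {r : α → α → Prop} {P Q : α → Prop}
    (hstep : ∀ a b, P a → r a b → P b ∧ Q b) {a b : α} (ha : P a) (hab : Relation.TransGen r a b) :
    Q b := by
  suffices P b ∧ Q b from this.2
  induction hab with
  | single h => exact hstep _ _ ha h
  | tail _ h ih => exact hstep _ _ ih.1 h

namespace CLCModel

variable {N : Type} [Fintype N] [DecidableEq N] {S : Type} (M : CLCModel N S)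

def step (G : Finset N) (a b : S) : Prop := ∃ i ∈ G, M.rel i a b

def truthSet (φ : CLCForm N) : Set S := {t | CLCSat M t φ}

theorem sat_coal_iff {s : S} {G : Finset N} {φ : CLCForm N} :
    CLCSat M s (.coal G φ) ↔ M.truthSet φ ∈ M.eff s G := Iff.rfl

@[simp] theorem truthSet_bot : M.truthSet .bot = ∅ := by
  ext; simp [truthSet, CLCSat]

@[simp] theorem truthSet_top : M.truthSet .top = Set.univ := by
  ext; simp [truthSet, CLCSat, CLCForm.top, CLCForm.neg]

@[simp] theorem truthSet_neg (φ : CLCForm N) : M.truthSet φ.neg = (M.truthSet φ)ᶜ := by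
  ext; simp [truthSet, CLCSat, CLCForm.neg]

@[simp] theorem sat_neg_iff {s : S} {φ : CLCForm N} : CLCSat M s φ.neg ↔ ¬ CLCSat M s φ :=
  Iff.rfl

open Classical in
theorem propEval_sat_iff (s : S) (φ : CLCForm N) :
    CLCForm.propEval (fun ψ => decide (CLCSat M s ψ)) φ = true ↔ CLCSat M s φ := by
  induction φ with
  | imp φ ψ ihφ ihψ =>
    simp only [CLCForm.propEval, CLCSat, Bool.or_eq_true, Bool.not_eq_true', ← ihφ, ← ihψ]
    cases CLCForm.propEval (fun ψ => decide (CLCSat M s ψ)) φ <;> simp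
  | and φ ψ ihφ ihψ => simp [CLCForm.propEval, CLCSat, ihφ, ihψ]
  | bot => simp [CLCForm.propEval, CLCSat]
  | _ => exact decide_eq_true_iff

theorem sat_ev_iff (s : S) (G : Finset N) (φ : CLCForm N) :
    CLCSat M s (.ev G φ) ↔ ∀ i ∈ G, ∀ t, M.rel i s t → CLCSat M t φ := by
  have hfold : ∀ l : List N, CLCSat M s ((l.map (CLCForm.know · φ)).foldr .and .top) ↔
      ∀ i ∈ l, ∀ t, M.rel i s t → CLCSat M t φ := by
    intro l
    induction l with
    | nil => simp [CLCSat, CLCForm.top, CLCForm.neg]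
    | cons a l ih => simp [CLCSat, ih]
  simpa [CLCForm.ev] using hfold G.toList

theorem sat_ev_iff_step (s : S) (G : Finset N) (φ : CLCForm N) :
    CLCSat M s (.ev G φ) ↔ ∀ t, M.step G s t → CLCSat M t φ := by
  simp only [sat_ev_iff, step]
  exact ⟨fun h t ⟨i, hi, hst⟩ => h i hi t hst, fun h i hi t hst => h t ⟨i, hi, hst⟩⟩

theorem sat_common_fixpoint (s : S) (G : Finset N) (φ : CLCForm N) :
    CLCSat M s (.imp (.common G φ) (.ev G (.and φ (.common G φ)))) := by
  intro h
  rw [sat_ev_iff_step]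
  intro t hst
  exact ⟨h t (.single hst), fun u htu => h u (.head hst htu)⟩

theorem sat_common_induction {G : Finset N} {φ ψ : CLCForm N}
    (h : ∀ s, CLCSat M s (.imp φ (.ev G (.and φ ψ)))) (s : S) :
    CLCSat M s (.imp φ (.common G ψ)) := fun hφ _ hst =>
  Relation.TransGen.of_forall_invariant
    (fun a b ha hab => (M.sat_ev_iff_step a G _).1 (h a ha) b hab) hφ hst

end CLCModel

namespace CLCForm.Prov

variable {N : Type} [Fintype N] [DecidableEq N]

theorem sat {φ : CLCForm N} (h : Prov φ) {S : Type} (M : CLCModel N S) (s : S) :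
    CLCSat M s φ := by
  induction h generalizing s with
  | taut φ hv => exact (M.propEval_sat_iff s φ).1 (hv _)
  | g1 G => exact fun h => M.e1 s G (by simpa [CLCModel.sat_coal_iff] using h)
  | g2 G => simpa [CLCModel.sat_coal_iff] using M.e2 s G
  | g3 φ => exact fun h => M.e3 s (M.truthSet φ) (by simpa [CLCModel.sat_coal_iff] using h)
  | g4 G φ ψ => exact fun h => M.e4 s G _ _ h Set.inter_subset_right
  | g5 G₁ G₂ φ ψ hdisj => exact fun h => M.e5 s G₁ G₂ _ _ hdisj h.1 h.2
  | mp φ ψ _ _ ihφψ ihφ => exact ihφψ s (ihφ s)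
  | rg G φ ψ _ ih =>
    have heq : M.truthSet φ = M.truthSet ψ := Set.ext fun t => ⟨(ih t).1, (ih t).2⟩
    exact ⟨fun h => by rwa [M.sat_coal_iff, ← heq], fun h => by rwa [M.sat_coal_iff, heq]⟩
  | axK i φ ψ => exact fun hφψ hφ t hst => hφψ t hst (hφ t hst)
  | axT i φ => exact fun h => h s ((M.equiv i).refl s)
  | ax4 i φ => exact fun h t hst u htu => h u ((M.equiv i).trans hst htu)
  | ax5 i φ =>
    exact fun h t hst hk => h fun u hsu => hk u ((M.equiv i).trans ((M.equiv i).symm hst) hsu)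
  | rn i φ _ ih => exact fun t _ => ih t
  | c2 G φ => exact M.sat_common_fixpoint s G φ
  | rc G φ ψ _ ih => exact M.sat_common_induction ih s

end CLCForm.Prov

/-- Soundness of CLC: every formula derivable in the axiom system CLC is valid in all
epistemic coalition models. -/
theorem CLC_soundness {N : Type} [Fintype N] [DecidableEq N] (φ : CLCForm N)
    (h : CLCForm.Prov φ) :
    ∀ (S : Type) (_ : Nonempty S) (M : CLCModel N S) (s : S), CLCSat M s φ :=
  fun _ _ M s => h.sat M s
end

section
/- Lifting an effectivity function along a surjection preserves playability for nonempty proper coalitions and all axioms E1–E5: Let f : S' → S be surjective, E a truly playable effectivity function on S, and define E' by: for G ≠ N, Y ∈ E'(G)(u) iff there exists X ⊆ S with f⁻¹(X) ⊆ Y and X ∈ E(G)(f(u)); and Y ∈ E'(N)(u) iff S'∖Y ∉ E'(∅)(u). Then E' satisfies E1–E5. -/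
open Classical

/-- The lifting of an effectivity function `E` on `S` along a surjection `f : S' → S`:
for `G ≠ N`, `Y ∈ E'(G)(u)` iff `∃ X ⊆ S, f⁻¹(X) ⊆ Y ∧ X ∈ E(G)(f u)`;
for `G = N`, `Y ∈ E'(N)(u)` iff `S' ∖ Y ∉ E'(∅)(u)`. -/
noncomputable def liftEff {N S S' : Type*} (E : Set N → S → Set (Set S)) (f : S' → S)
    (G : Set N) (u : S') : Set (Set S') :=
  if G = (Set.univ : Set N) then
    {Y : Set S' | Yᶜ ∉ {Z : Set S' | ∃ X : Set S, f ⁻¹' X ⊆ Z ∧ X ∈ E ∅ (f u)}}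
  else
    {Y : Set S' | ∃ X : Set S, f ⁻¹' X ⊆ Y ∧ X ∈ E G (f u)}

/-!
For a proper coalition `G`, `E'(G)(u)` is the upward closure of the preimages of `E(G)(f u)`;
it is monotone by construction and inherits E1, E2 and E5 from `E`, surjectivity of `f` making
`f⁻¹ X = ∅` force `X = ∅`. Since `E'(∅)(u)` is closed under intersections, its dual
`E'(N)(u) = {Y | Yᶜ ∉ E'(∅)(u)}` is closed under intersection with members of `E'(∅)(u)`.
The remaining case of E5, disjoint proper coalitions with `G₁ ∪ G₂ = N`, holds because `X ∩ Y`
then lies in the upward closure of the preimages of `E(N)(f u)`, and no member `A` of it has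
`Aᶜ ∈ E'(∅)(u)`: by E5 for `N` and `∅`, `A ∩ Aᶜ = ∅` would lie there too.
-/

open Set

lemma compl_inter_notMem_of_compl_notMem {α : Type*} {𝒰 : Set (Set α)} {X Y : Set α}
    (hmono : ∀ A B, A ∈ 𝒰 → A ⊆ B → B ∈ 𝒰) (hinter : ∀ A B, A ∈ 𝒰 → B ∈ 𝒰 → A ∩ B ∈ 𝒰)
    (hX : Xᶜ ∉ 𝒰) (hY : Y ∈ 𝒰) : (X ∩ Y)ᶜ ∉ 𝒰 := fun hXY =>
  hX <| hmono _ _ (hinter _ _ hXY hY) fun _ ⟨hnXY, hy⟩ hx => hnXY ⟨hx, hy⟩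

section liftEffProper

variable {N S S' : Type*} (E : Set N → S → Set (Set S)) (f : S' → S)

def liftEffProper (G : Set N) (u : S') : Set (Set S') :=
  {Y | ∃ X, f ⁻¹' X ⊆ Y ∧ X ∈ E G (f u)}

variable {E f} {G G₁ G₂ : Set N} {u : S'} {X Y : Set S'}

lemma liftEff_of_ne_univ (hG : G ≠ univ) : liftEff E f G u = liftEffProper E f G u :=
  if_neg hG

lemma liftEff_univ : liftEff E f univ u = {Y | Yᶜ ∉ liftEffProper E f ∅ u} :=
  if_pos rfl

lemma liftEff_empty [Nonempty N] : liftEff E f ∅ u = liftEffProper E f ∅ u :=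
  liftEff_of_ne_univ empty_ne_univ

lemma mem_liftEff_univ_iff [Nonempty N] : Y ∈ liftEff E f univ u ↔ Yᶜ ∉ liftEff E f ∅ u := by
  rw [liftEff_univ, liftEff_empty, mem_ofPred_eq]

lemma empty_notMem_liftEffProper (hf : Function.Surjective f) (h : ∅ ∉ E G (f u)) :
    ∅ ∉ liftEffProper E f G u := by
  rintro ⟨X, hX, hXE⟩
  have : X = ∅ := hf.preimage_injective (subset_empty_iff.mp hX)
  exact h (this ▸ hXE)

lemma univ_mem_liftEffProper (h : univ ∈ E G (f u)) : univ ∈ liftEffProper E f G u :=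
  ⟨univ, subset_univ _, h⟩

lemma mem_liftEffProper_of_subset (hX : X ∈ liftEffProper E f G u) (hXY : X ⊆ Y) :
    Y ∈ liftEffProper E f G u :=
  let ⟨W, hW, hWE⟩ := hX
  ⟨W, hW.trans hXY, hWE⟩

lemma inter_mem_liftEffProper
    (h : ∀ A B, A ∈ E G₁ (f u) → B ∈ E G₂ (f u) → A ∩ B ∈ E G (f u))
    (hX : X ∈ liftEffProper E f G₁ u) (hY : Y ∈ liftEffProper E f G₂ u) :
    X ∩ Y ∈ liftEffProper E f G u :=
  let ⟨A, hA, hAE⟩ := hX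
  let ⟨B, hB, hBE⟩ := hY
  ⟨A ∩ B, preimage_inter ▸ inter_subset_inter hA hB, h A B hAE hBE⟩

lemma compl_notMem_liftEffProper_empty (hf : Function.Surjective f) (hE1 : ∅ ∉ E G (f u))
    (hE5 : ∀ A B, A ∈ E G (f u) → B ∈ E ∅ (f u) → A ∩ B ∈ E G (f u))
    (hX : X ∈ liftEffProper E f G u) : Xᶜ ∉ liftEffProper E f ∅ u := fun hXc => by
  have h := inter_mem_liftEffProper hE5 hX hXc
  rw [inter_compl_self] at h
  exact empty_notMem_liftEffProper hf hE1 h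

end liftEffProper

section liftEff

variable {N S S' : Type*} {E : Set N → S → Set (Set S)} {f : S' → S}
  {G G₁ G₂ : Set N} {u : S'} {X Y : Set S'}

lemma empty_notMem_liftEff (hf : Function.Surjective f) (hE1 : ∀ G s, ∅ ∉ E G s)
    (hE2 : ∀ G s, univ ∈ E G s) : ∅ ∉ liftEff E f G u := by
  by_cases hG : G = univ
  · rw [hG, liftEff_univ, mem_ofPred_eq, compl_empty, not_not]
    exact univ_mem_liftEffProper (hE2 _ _)
  · rw [liftEff_of_ne_univ hG]
    exact empty_notMem_liftEffProper hf (hE1 _ _)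

lemma univ_mem_liftEff (hf : Function.Surjective f) (hE1 : ∀ G s, ∅ ∉ E G s)
    (hE2 : ∀ G s, univ ∈ E G s) : univ ∈ liftEff E f G u := by
  by_cases hG : G = univ
  · rw [hG, liftEff_univ, mem_ofPred_eq, compl_univ]
    exact empty_notMem_liftEffProper hf (hE1 _ _)
  · rw [liftEff_of_ne_univ hG]
    exact univ_mem_liftEffProper (hE2 _ _)

lemma mem_liftEff_of_subset (hX : X ∈ liftEff E f G u) (hXY : X ⊆ Y) :
    Y ∈ liftEff E f G u := by
  by_cases hG : G = univ
  · rw [hG, liftEff_univ] at hX ⊢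
    exact fun hY => hX (mem_liftEffProper_of_subset hY (compl_subset_compl.mpr hXY))
  · rw [liftEff_of_ne_univ hG] at hX ⊢
    exact mem_liftEffProper_of_subset hX hXY

lemma inter_mem_liftEff_univ_of_mem_empty [Nonempty N]
    (hE5 : ∀ A B, A ∈ E ∅ (f u) → B ∈ E ∅ (f u) → A ∩ B ∈ E ∅ (f u))
    (hX : X ∈ liftEff E f univ u) (hY : Y ∈ liftEff E f ∅ u) :
    X ∩ Y ∈ liftEff E f univ u := by
  rw [liftEff_univ] at hX ⊢
  rw [liftEff_empty] at hY
  exact compl_inter_notMem_of_compl_notMem (fun _ _ => mem_liftEffProper_of_subset)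
    (fun _ _ => inter_mem_liftEffProper hE5) hX hY

lemma inter_mem_liftEff [Nonempty N] (hf : Function.Surjective f) (hE1 : ∀ G s, ∅ ∉ E G s)
    (hE5 : ∀ G₁ G₂ s X Y, G₁ ∩ G₂ = ∅ → X ∈ E G₁ s → Y ∈ E G₂ s → X ∩ Y ∈ E (G₁ ∪ G₂) s)
    (hG : G₁ ∩ G₂ = ∅) (hX : X ∈ liftEff E f G₁ u) (hY : Y ∈ liftEff E f G₂ u) :
    X ∩ Y ∈ liftEff E f (G₁ ∪ G₂) u := by
  have hE5_empty := fun A B => union_self (∅ : Set N) ▸ hE5 ∅ ∅ (f u) A B (inter_self _)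
  by_cases h₁ : G₁ = univ
  · subst h₁
    obtain rfl : G₂ = ∅ := by rwa [univ_inter] at hG
    rw [univ_union]
    exact inter_mem_liftEff_univ_of_mem_empty hE5_empty hX hY
  by_cases h₂ : G₂ = univ
  · subst h₂
    obtain rfl : G₁ = ∅ := by rwa [inter_univ] at hG
    rw [union_univ, inter_comm]
    exact inter_mem_liftEff_univ_of_mem_empty hE5_empty hY hX
  rw [liftEff_of_ne_univ h₁] at hX
  rw [liftEff_of_ne_univ h₂] at hY
  have hXY := inter_mem_liftEffProper (hE5 G₁ G₂ (f u) · · hG) hX hY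
  by_cases h : G₁ ∪ G₂ = univ
  · rw [h, liftEff_univ]
    rw [h] at hXY
    exact compl_notMem_liftEffProper_empty hf (hE1 _ _)
      (fun A B => by simpa only [union_empty] using hE5 univ ∅ (f u) A B (inter_empty _)) hXY
  · rw [liftEff_of_ne_univ h]
    exact hXY

end liftEff

theorem liftEff_playable_general {N S S' : Type*} [Nonempty N]
    (E : Set N → S → Set (Set S)) (f : S' → S) (hf : Function.Surjective f)
    (E1 : ∀ (G : Set N) (s : S), (∅ : Set S) ∉ E G s)
    (E2 : ∀ (G : Set N) (s : S), (Set.univ : Set S) ∈ E G s)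
    (E5 : ∀ (G₁ G₂ : Set N) (s : S) (X Y : Set S), G₁ ∩ G₂ = ∅ →
      X ∈ E G₁ s → Y ∈ E G₂ s → X ∩ Y ∈ E (G₁ ∪ G₂) s) :
    (∀ (G : Set N) (u : S'), (∅ : Set S') ∉ liftEff E f G u) ∧
    (∀ (G : Set N) (u : S'), (Set.univ : Set S') ∈ liftEff E f G u) ∧
    (∀ (u : S') (Y : Set S'), Yᶜ ∉ liftEff E f ∅ u → Y ∈ liftEff E f Set.univ u) ∧
    (∀ (G : Set N) (u : S') (X Y : Set S'), X ∈ liftEff E f G u → X ⊆ Y →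
      Y ∈ liftEff E f G u) ∧
    (∀ (G₁ G₂ : Set N) (u : S') (X Y : Set S'), G₁ ∩ G₂ = ∅ →
      X ∈ liftEff E f G₁ u → Y ∈ liftEff E f G₂ u → X ∩ Y ∈ liftEff E f (G₁ ∪ G₂) u) := by
  exact ⟨fun _ _ => empty_notMem_liftEff hf E1 E2, fun _ _ => univ_mem_liftEff hf E1 E2,
    fun _ _ => mem_liftEff_univ_iff.mpr, fun _ _ _ _ => mem_liftEff_of_subset,
    fun _ _ _ _ _ => inter_mem_liftEff hf E1 E5⟩

/-- Lifting a truly playable effectivity function along a surjection preserves E1–E5. -/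
theorem liftEff_playable {N S S' : Type*} [Nonempty N]
    (E : Set N → S → Set (Set S)) (f : S' → S) (hf : Function.Surjective f)
    (E1 : ∀ (G : Set N) (s : S), (∅ : Set S) ∉ E G s)
    (E2 : ∀ (G : Set N) (s : S), (Set.univ : Set S) ∈ E G s)
    (E3 : ∀ (s : S) (X : Set S), Xᶜ ∉ E ∅ s → X ∈ E Set.univ s)
    (E4 : ∀ (G : Set N) (s : S) (X Y : Set S), X ∈ E G s → X ⊆ Y → Y ∈ E G s)
    (E5 : ∀ (G₁ G₂ : Set N) (s : S) (X Y : Set S), G₁ ∩ G₂ = ∅ →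
      X ∈ E G₁ s → Y ∈ E G₂ s → X ∩ Y ∈ E (G₁ ∪ G₂) s)
    (E6 : ∀ s : S, {X | X ∈ E ∅ s ∧ ¬ ∃ Y ∈ E ∅ s, Y ⊂ X}.Nonempty) :
    (∀ (G : Set N) (u : S'), (∅ : Set S') ∉ liftEff E f G u) ∧
    (∀ (G : Set N) (u : S'), (Set.univ : Set S') ∈ liftEff E f G u) ∧
    (∀ (u : S') (Y : Set S'), Yᶜ ∉ liftEff E f ∅ u → Y ∈ liftEff E f Set.univ u) ∧
    (∀ (G : Set N) (u : S') (X Y : Set S'), X ∈ liftEff E f G u → X ⊆ Y →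
      Y ∈ liftEff E f G u) ∧
    (∀ (G₁ G₂ : Set N) (u : S') (X Y : Set S'), G₁ ∩ G₂ = ∅ →
      X ∈ liftEff E f G₁ u → Y ∈ liftEff E f G₂ u → X ∩ Y ∈ liftEff E f (G₁ ∪ G₂) u) :=
  liftEff_playable_general E f hf E1 E2 E5
end

section
/- Lifting along a surjection preserves the non-monotonic core (E6): with f : S' → S surjective and E' defined from E as in the lifting construction, if X is in the non-monotonic core of E(∅)(s) (i.e., X ∈ E(∅)(s) and no proper subset of X is in E(∅)(s)), then for every u with f(u) = s, f⁻¹(X) is in the non-monotonic core of E'(∅)(u). In particular if E satisfies E6 so does E'. -/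
/-- The empty-coalition part of the lifting of an effectivity function along `f : S' → S`:
`Y ∈ E'(∅)(u)` iff `∃ X, f⁻¹(X) ⊆ Y ∧ X ∈ E(∅)(f u)`. -/
def liftEmpty {N S S' : Type*} (E : Set N → S → Set (Set S)) (f : S' → S)
    (u : S') : Set (Set S') :=
  {Y : Set S' | ∃ X : Set S, f ⁻¹' X ⊆ Y ∧ X ∈ E ∅ (f u)}

/-- Lifting along a surjection preserves the non-monotonic core (E6): if `X` is in the
non-monotonic core of `E(∅)(s)` then for every `u` with `f u = s`, `f⁻¹(X)` is in the
non-monotonic core of `E'(∅)(u)`; in particular if `E` satisfies E6 then so does `E'`. -/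
theorem liftEff_core {N S S' : Type*} (E : Set N → S → Set (Set S))
    (f : S' → S) (hf : Function.Surjective f) :
    (∀ (s : S) (X : Set S), X ∈ E ∅ s → (¬ ∃ Y ∈ E ∅ s, Y ⊂ X) →
      ∀ u : S', f u = s →
        f ⁻¹' X ∈ liftEmpty E f u ∧ ¬ ∃ W ∈ liftEmpty E f u, W ⊂ f ⁻¹' X) ∧
    ((∀ s : S, {X | X ∈ E ∅ s ∧ ¬ ∃ Y ∈ E ∅ s, Y ⊂ X}.Nonempty) →
      ∀ u : S', {Y | Y ∈ liftEmpty E f u ∧ ¬ ∃ W ∈ liftEmpty E f u, W ⊂ Y}.Nonempty) := by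
  have main : ∀ (s : S) (X : Set S), X ∈ E ∅ s → (¬ ∃ Y ∈ E ∅ s, Y ⊂ X) →
      ∀ u : S', f u = s →
        f ⁻¹' X ∈ liftEmpty E f u ∧ ¬ ∃ W ∈ liftEmpty E f u, W ⊂ f ⁻¹' X := by
    intro s X hX hcore u hu
    subst hu
    constructor
    · exact ⟨X, subset_rfl, hX⟩
    · rintro ⟨W, ⟨Z, hZW, hZ⟩, hWX⟩
      have hZX : f ⁻¹' Z ⊆ f ⁻¹' X := hZW.trans hWX.subset
      have hZsubX : Z ⊆ X := by
        rwa [Set.preimage_subset_preimage_iff (by rw [hf.range_eq]; exact Set.subset_univ _)]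
          at hZX
      rcases eq_or_ne Z X with rfl | hne
      · exact hWX.not_subset hZW
      · exact hcore ⟨Z, hZ, ⟨hZsubX, fun h => hne (subset_antisymm hZsubX h)⟩⟩
  refine ⟨main, fun h6 u => ?_⟩
  obtain ⟨X, hX, hcore⟩ := h6 (f u)
  exact ⟨f ⁻¹' X, main (f u) X hX hcore u rfl⟩
end

section
/- In the finite filtration of a canonical model through a closure set, two filtrated states related by ∼ᵢ^f agree on all Kᵢ-formulas in the closure: if φ_{[s]} ∧ ⟨Kᵢ⟩φ_{[t]} is consistent (where ⟨Kᵢ⟩ is the dual of the S5 modality Kᵢ and φ_{[s]}, φ_{[t]} are the conjunctions of the finite sets [s], [t]), then [s] and [t] contain exactly the same formulas of the form Kᵢχ from the closure set. -/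
/-- Epistemic formulas with S5 knowledge modalities `Kᵢ`, `i : N`. -/
inductive MForm (N : Type) : Type
  | atom : ℕ → MForm N
  | bot : MForm N
  | imp : MForm N → MForm N → MForm N
  | and : MForm N → MForm N → MForm N
  | know : N → MForm N → MForm N
  deriving DecidableEq

namespace MForm

variable {N : Type}

def neg (φ : MForm N) : MForm N := imp φ bot
def top : MForm N := neg bot
/-- The dual `⟨Kᵢ⟩` of the knowledge modality. -/
def dia (i : N) (φ : MForm N) : MForm N := neg (know i (neg φ))

/-- Propositional evaluation treating modal formulas as atoms. -/
def propEval (v : MForm N → Bool) : MForm N → Bool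
  | atom n => v (atom n)
  | bot => false
  | imp φ ψ => !(propEval v φ) || propEval v ψ
  | and φ ψ => propEval v φ && propEval v ψ
  | know i φ => v (know i φ)

/-- S5 provability: propositional tautologies, K, T, 4, 5, modus ponens and necessitation. -/
inductive Prov : MForm N → Prop
  | taut (φ : MForm N) : (∀ v, propEval v φ = true) → Prov φ
  | axK (i : N) (φ ψ : MForm N) :
      Prov (imp (know i (imp φ ψ)) (imp (know i φ) (know i ψ)))
  | axT (i : N) (φ : MForm N) : Prov (imp (know i φ) φ)
  | ax4 (i : N) (φ : MForm N) : Prov (imp (know i φ) (know i (know i φ)))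
  | ax5 (i : N) (φ : MForm N) : Prov (imp (neg (know i φ)) (know i (neg (know i φ))))
  | mp (φ ψ : MForm N) : Prov (imp φ ψ) → Prov φ → Prov ψ
  | nec (i : N) (φ : MForm N) : Prov φ → Prov (know i φ)

/-- A formula is consistent if its negation is not provable. -/
def Consistent (φ : MForm N) : Prop := ¬ Prov (neg φ)

/-- Conjunction of a finite set of formulas. -/
noncomputable def conj (s : Finset (MForm N)) : MForm N :=
  s.toList.foldr and top

end MForm

namespace MForm

variable {N : Type}

lemma prov_comp {a b c : MForm N} (h1 : Prov (imp a b)) (h2 : Prov (imp b c)) :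
    Prov (imp a c) := by
  have t : Prov (imp (imp a b) (imp (imp b c) (imp a c))) := by
    apply Prov.taut; intro v
    simp only [propEval]
    cases propEval v a <;> cases propEval v b <;> cases propEval v c <;> rfl
  exact Prov.mp _ _ (Prov.mp _ _ t h1) h2

lemma prov_and_left (a b : MForm N) : Prov (imp (and a b) a) := by
  apply Prov.taut; intro v
  simp only [propEval]
  cases propEval v a <;> cases propEval v b <;> rfl

lemma prov_and_right (a b : MForm N) : Prov (imp (and a b) b) := by
  apply Prov.taut; intro v
  simp only [propEval]
  cases propEval v a <;> cases propEval v b <;> rfl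

lemma prov_swap_neg {a b : MForm N} (h : Prov (imp a (neg b))) :
    Prov (imp b (neg a)) := by
  have t : Prov (imp (imp a (neg b)) (imp b (neg a))) := by
    apply Prov.taut; intro v
    simp only [propEval, neg]
    cases propEval v a <;> cases propEval v b <;> rfl
  exact Prov.mp _ _ t h

lemma prov_contrap {a b : MForm N} (h : Prov (imp a b)) :
    Prov (imp (neg b) (neg a)) := by
  have t : Prov (imp (imp a b) (imp (neg b) (neg a))) := by
    apply Prov.taut; intro v
    simp only [propEval, neg]
    cases propEval v a <;> cases propEval v b <;> rfl
  exact Prov.mp _ _ t h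

lemma prov_kdist (i : N) {a b : MForm N} (h : Prov (imp a b)) :
    Prov (imp (know i a) (know i b)) :=
  Prov.mp _ _ (Prov.axK i a b) (Prov.nec i _ h)

lemma prov_final {a b : MForm N} (h : Prov (imp a b)) :
    Prov (neg (and a (neg b))) := by
  have t : Prov (imp (imp a b) (neg (and a (neg b)))) := by
    apply Prov.taut; intro v
    simp only [propEval, neg]
    cases propEval v a <;> cases propEval v b <;> rfl
  exact Prov.mp _ _ t h

lemma prov_foldr_mem {ψ : MForm N} : ∀ l : List (MForm N), ψ ∈ l →
    Prov (imp (l.foldr and top) ψ)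
  | [], h => by cases h
  | a :: l, h => by
    rcases List.mem_cons.1 h with rfl | h
    · exact prov_and_left _ _
    · exact prov_comp (prov_and_right _ _) (prov_foldr_mem l h)

lemma prov_conj_mem {s : Finset (MForm N)} {ψ : MForm N} (h : ψ ∈ s) :
    Prov (imp (conj s) ψ) :=
  prov_foldr_mem _ (Finset.mem_toList.2 h)

end MForm

open MForm in
/-- If `φ_{[s]} ∧ ⟨Kᵢ⟩ φ_{[t]}` is consistent (in S5), where `[s]`, `[t]` are restrictions to
the closure set `cl` of maximal consistent sets (so they decide every `Kᵢχ ∈ cl`), then `[s]`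
and `[t]` contain exactly the same formulas `Kᵢχ` from `cl`. -/
theorem filtration_knowledge_agreement {N : Type} [DecidableEq N] (i : N)
    (cl s t : Finset (MForm N)) (hs : s ⊆ cl) (ht : t ⊆ cl)
    (hsdec : ∀ ψ : MForm N, MForm.know i ψ ∈ cl →
      MForm.know i ψ ∈ s ∨ MForm.neg (MForm.know i ψ) ∈ s)
    (htdec : ∀ ψ : MForm N, MForm.know i ψ ∈ cl →
      MForm.know i ψ ∈ t ∨ MForm.neg (MForm.know i ψ) ∈ t)
    (hcon : Consistent (MForm.and (conj s) (dia i (conj t)))) :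
    ∀ χ : MForm N, MForm.know i χ ∈ cl → (MForm.know i χ ∈ s ↔ MForm.know i χ ∈ t) := by
  intro χ hχ
  constructor
  · intro hKs
    by_contra hKt
    rcases htdec χ hχ with h | h
    · exact hKt h
    apply hcon
    have h1 : Prov (imp (conj s) (know i χ)) := prov_conj_mem hKs
    have h2 : Prov (imp (conj t) (neg (know i χ))) := prov_conj_mem h
    have h3 : Prov (imp (know i χ) (neg (conj t))) := prov_swap_neg h2
    have h4 : Prov (imp (know i (know i χ)) (know i (neg (conj t)))) := prov_kdist i h3
    have h5 : Prov (imp (conj s) (know i (neg (conj t)))) :=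
      prov_comp h1 (prov_comp (Prov.ax4 i χ) h4)
    exact prov_final h5
  · intro hKt
    by_contra hKs
    rcases hsdec χ hχ with h | h
    · exact hKs h
    apply hcon
    have h1 : Prov (imp (conj s) (neg (know i χ))) := prov_conj_mem h
    have h2 : Prov (imp (conj t) (know i χ)) := prov_conj_mem hKt
    have h3 : Prov (imp (neg (know i χ)) (neg (conj t))) := prov_contrap h2
    have h4 : Prov (imp (know i (neg (know i χ))) (know i (neg (conj t)))) := prov_kdist i h3
    have h5 : Prov (imp (conj s) (know i (neg (conj t)))) :=
      prov_comp h1 (prov_comp (Prov.ax5 i χ) h4)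
    exact prov_final h5
end

section
/- Truth-set characterization via filtration classes: if the equivalence classes [t₁],…,[t_{n+k}] partition a finite filtration where ψ ∈ [tⱼ] for j ≤ n and ¬ψ ∈ [tⱼ] for j > n, and the disjunction of all class-conjunctions φ_{[t₁]} ∨ … ∨ φ_{[t_{n+k}]} is provably equivalent to ⊤, then the disjunction ∨_{ψ ∈ [t]} φ_{[t]} is provably equivalent to ψ. -/
/-- Propositional formulas. -/
inductive PForm : Type
  | atom : ℕ → PForm
  | bot : PForm
  | imp : PForm → PForm → PForm
  | and : PForm → PForm → PForm
  deriving DecidableEq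

namespace PForm

def neg (φ : PForm) : PForm := imp φ bot
def top : PForm := neg bot
def or (φ ψ : PForm) : PForm := imp (neg φ) ψ
def iff (φ ψ : PForm) : PForm := and (imp φ ψ) (imp ψ φ)

/-- Classical truth-table evaluation. -/
def eval (v : ℕ → Bool) : PForm → Bool
  | atom n => v n
  | bot => false
  | imp φ ψ => !(eval v φ) || eval v ψ
  | and φ ψ => eval v φ && eval v ψ

/-- Provability in classical propositional logic. -/
inductive Prov : PForm → Prop
  | taut (φ : PForm) : (∀ v, eval v φ = true) → Prov φ
  | mp (φ ψ : PForm) : Prov (imp φ ψ) → Prov φ → Prov ψ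

/-- Conjunction of the formulas in a class. -/
def conjList : List PForm → PForm
  | [] => top
  | φ :: l => and φ (conjList l)

/-- Disjunction of a list of formulas. -/
def disjList : List PForm → PForm
  | [] => bot
  | φ :: l => or φ (disjList l)

theorem sound {φ : PForm} (h : Prov φ) : ∀ v, eval v φ = true := by
  induction h with
  | taut φ h => exact h
  | mp φ ψ h1 h2 ih1 ih2 =>
    intro v
    have h1 := ih1 v
    simp [eval, ih2 v] at h1
    exact h1

theorem eval_disj (v : ℕ → Bool) (l : List PForm) :
    eval v (disjList l) = true ↔ ∃ φ ∈ l, eval v φ = true := by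
  induction l with
  | nil => simp [disjList, eval]
  | cons φ l ih => simp [disjList, or, neg, eval, ih]

theorem eval_conj_mem (v : ℕ → Bool) {t : List PForm} {φ : PForm}
    (hm : φ ∈ t) (h : eval v (conjList t) = true) : eval v φ = true := by
  induction t with
  | nil => simp at hm
  | cons χ l ih =>
    simp [conjList, eval] at h
    rcases List.mem_cons.mp hm with rfl | hm
    · exact h.1
    · exact ih hm h.2

end PForm

open PForm in
/-- Truth-set characterization via filtration classes: if each class contains `ψ` or `¬ψ`,
and the disjunction of all class-conjunctions is provably equivalent to `⊤`, then the
disjunction of the conjunctions of the classes containing `ψ` is provably equivalent to `ψ`. -/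
theorem filtration_truthset_disjunction (ψ : PForm) (classes : List (List PForm))
    (hdich : ∀ t ∈ classes, ψ ∈ t ∨ PForm.neg ψ ∈ t)
    (hcover : Prov (PForm.iff (disjList (classes.map conjList)) PForm.top)) :
    Prov (PForm.iff
      (disjList ((classes.filter (fun t => decide (ψ ∈ t))).map conjList)) ψ) := by
  apply Prov.taut
  intro v
  have hc := PForm.sound hcover v
  simp [PForm.iff, PForm.top, PForm.neg, eval] at hc
  have key : eval v (disjList ((classes.filter (fun t => decide (ψ ∈ t))).map conjList)) = true
      ↔ eval v ψ = true := by
    constructor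
    · intro h
      rw [eval_disj] at h
      obtain ⟨φ, hφ, hev⟩ := h
      simp only [List.mem_map, List.mem_filter] at hφ
      obtain ⟨t, ⟨ht, hmem⟩, rfl⟩ := hφ
      exact eval_conj_mem v (by simpa using hmem) hev
    · intro hψ
      rw [eval_disj] at hc
      obtain ⟨φ, hφ, hev⟩ := hc
      simp only [List.mem_map] at hφ
      obtain ⟨t, ht, rfl⟩ := hφ
      rcases hdich t ht with hm | hm
      · rw [eval_disj]
        refine ⟨conjList t, ?_, hev⟩
        simp only [List.mem_map, List.mem_filter]
        exact ⟨t, ⟨ht, by simpa using hm⟩, rfl⟩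
      · have := eval_conj_mem v hm hev
        simp [eval, PForm.neg, hψ] at this
  simp only [PForm.iff, eval]
  cases hd : eval v (disjList ((classes.filter (fun t => decide (ψ ∈ t))).map conjList)) <;>
    cases hψ : eval v ψ <;> simp_all
end

section
/- In the canonical model for CLC, membership of [G]ψ is characterized by truth sets: for a maximal consistent set s and G ≠ N, {s' : ψ ∈ s'} ∈ E^c(G)(s) if and only if [G]ψ ∈ s, where E^c(G)(s) = {X : ∃γ, {s' : γ ∈ s'} ⊆ X and [G]γ ∈ s}. The key step is: {s' : γ ∈ s'} ⊆ {s' : ψ ∈ s'} (over all maximal consistent sets) implies ⊢ γ → ψ, and then the derivable monotonicity rule gives [G]ψ ∈ s. -/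
/-- Formulas of coalition logic over agents `N`. -/
inductive CLForm (N : Type) : Type
  | atom : ℕ → CLForm N
  | bot : CLForm N
  | imp : CLForm N → CLForm N → CLForm N
  | and : CLForm N → CLForm N → CLForm N
  | coal : Set N → CLForm N → CLForm N

namespace CLForm

variable {N : Type}

def neg (φ : CLForm N) : CLForm N := imp φ bot
def top : CLForm N := neg bot
def iff (φ ψ : CLForm N) : CLForm N := and (imp φ ψ) (imp ψ φ)

/-- Propositional evaluation treating coalition formulas as atoms. -/
def propEval (v : CLForm N → Bool) : CLForm N → Bool
  | atom n => v (atom n)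
  | bot => false
  | imp φ ψ => !(propEval v φ) || propEval v ψ
  | and φ ψ => propEval v φ && propEval v ψ
  | coal G φ => v (coal G φ)

/-- Provability in the axiom system CL. -/
inductive Prov : CLForm N → Prop
  | taut (φ : CLForm N) : (∀ v, propEval v φ = true) → Prov φ
  | g1 (G : Set N) : Prov (neg (coal G bot))
  | g2 (G : Set N) : Prov (coal G top)
  | g3 (φ : CLForm N) : Prov (imp (neg (coal ∅ (neg φ))) (coal Set.univ φ))
  | g4 (G : Set N) (φ ψ : CLForm N) : Prov (imp (coal G (and φ ψ)) (coal G ψ))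
  | g5 (G₁ G₂ : Set N) (φ ψ : CLForm N) : G₁ ∩ G₂ = ∅ →
      Prov (imp (and (coal G₁ φ) (coal G₂ ψ)) (coal (G₁ ∪ G₂) (and φ ψ)))
  | mp (φ ψ : CLForm N) : Prov (imp φ ψ) → Prov φ → Prov ψ
  | rg (G : Set N) (φ ψ : CLForm N) : Prov (iff φ ψ) →
      Prov (iff (coal G φ) (coal G ψ))

/-- Conjunction of a finite list of formulas. -/
def conjList : List (CLForm N) → CLForm N
  | [] => top
  | φ :: l => and φ (conjList l)

/-- A set of formulas is consistent if no finite subset provably implies `⊥`. -/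
def SetConsistent (Γ : Set (CLForm N)) : Prop :=
  ¬ ∃ L : List (CLForm N), (∀ χ ∈ L, χ ∈ Γ) ∧ Prov (imp (conjList L) bot)

/-- Maximal consistent sets of formulas. -/
def MCS (Γ : Set (CLForm N)) : Prop :=
  SetConsistent Γ ∧ ∀ χ : CLForm N, χ ∈ Γ ∨ neg χ ∈ Γ

end CLForm

/-!
If `[G]γ ∈ s` and every maximal consistent set containing `γ` contains `ψ`, then `γ → ψ` is
provable: otherwise `{γ, ¬ψ}` is consistent and Lindenbaum's lemma extends it to a maximal
consistent set separating the two. Rule RG together with G4 makes `[G]` monotone under provable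
implication, so `[G]γ → [G]ψ` is provable and `[G]ψ ∈ s` by deductive closure of `s`.
-/

namespace CLForm

variable {N : Type}

theorem Prov.taut_mp {φ ψ : CLForm N} (hφ : Prov φ)
    (h : ∀ v, propEval v φ = true → propEval v ψ = true) : Prov ψ :=
  Prov.mp φ ψ (Prov.taut _ fun v => by
    have := h v
    revert this
    simp only [propEval]
    cases propEval v φ <;> cases propEval v ψ <;> simp) hφ

theorem Prov.taut_mp₂ {φ χ ψ : CLForm N} (hφ : Prov φ) (hχ : Prov χ)
    (h : ∀ v, propEval v φ = true → propEval v χ = true → propEval v ψ = true) : Prov ψ :=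
  Prov.mp χ ψ (hφ.taut_mp fun v => by
    have := h v
    revert this
    simp only [propEval]
    cases propEval v φ <;> cases propEval v χ <;> cases propEval v ψ <;> simp) hχ

theorem Prov.coal_mono (G : Set N) {γ ψ : CLForm N} (h : Prov (imp γ ψ)) :
    Prov (imp (coal G γ) (coal G ψ)) := by
  have hiff : Prov (CLForm.iff γ (and γ ψ)) := h.taut_mp fun v => by
    simp only [CLForm.iff, propEval]
    cases propEval v γ <;> cases propEval v ψ <;> simp
  refine (Prov.rg G _ _ hiff).taut_mp₂ (Prov.g4 G γ ψ) fun v => ?_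
  simp only [CLForm.iff, propEval]
  cases v (coal G γ) <;> cases v (coal G (and γ ψ)) <;> cases v (coal G ψ) <;> simp

theorem propEval_conjList (v : CLForm N → Bool) (L : List (CLForm N)) :
    propEval v (conjList L) = L.all (propEval v) := by
  induction L with
  | nil => simp [conjList, top, neg, propEval]
  | cons φ l ih => simp [conjList, propEval, ih]

theorem SetConsistent.not_prov_imp {Γ : Set (CLForm N)} (hΓ : SetConsistent Γ) {γ ψ : CLForm N}
    (hγ : γ ∈ Γ) (hψ : neg ψ ∈ Γ) : ¬ Prov (imp γ ψ) := fun h =>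
  hΓ ⟨[γ, neg ψ], by simp [hγ, hψ], h.taut_mp fun v => by
    simp only [propEval_conjList, propEval, neg, List.all_cons, List.all_nil]
    cases propEval v γ <;> cases propEval v ψ <;> simp⟩

theorem MCS.mem_of_prov_imp {Γ : Set (CLForm N)} (hΓ : MCS Γ) {γ ψ : CLForm N}
    (hγ : γ ∈ Γ) (h : Prov (imp γ ψ)) : ψ ∈ Γ :=
  (hΓ.2 ψ).resolve_right fun hψ => hΓ.1.not_prov_imp hγ hψ h

theorem exists_prov_imp_neg_of_not_setConsistent_insert {Γ : Set (CLForm N)} {χ : CLForm N}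
    (h : ¬ SetConsistent (insert χ Γ)) :
    ∃ L : List (CLForm N), (∀ φ ∈ L, φ ∈ Γ) ∧ Prov (imp (conjList L) (neg χ)) := by
  classical
  obtain ⟨L, hL, hbot⟩ := not_not.mp h
  refine ⟨L.filter (· ≠ χ), fun φ hφ => ?_, hbot.taut_mp fun v hv => ?_⟩
  · obtain ⟨hφL, hφχ⟩ := List.mem_filter.mp hφ
    exact (hL φ hφL).resolve_left (by simpa using hφχ)
  · have hall : propEval v (conjList (L.filter (· ≠ χ))) = true → propEval v χ = true →
        propEval v (conjList L) = true := fun hrest hχ => by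
      simp only [propEval_conjList, List.all_eq_true] at hrest ⊢
      intro φ hφ
      by_cases hφχ : φ = χ
      · exact hφχ ▸ hχ
      · exact hrest φ (List.mem_filter.mpr ⟨hφ, by simpa using hφχ⟩)
    revert hv hall
    simp only [propEval, neg]
    cases propEval v χ <;> cases propEval v (conjList (L.filter (· ≠ χ))) <;>
      cases propEval v (conjList L) <;> simp

theorem SetConsistent.insert_or_insert_neg {Γ : Set (CLForm N)} (hΓ : SetConsistent Γ)
    (χ : CLForm N) : SetConsistent (insert χ Γ) ∨ SetConsistent (insert (neg χ) Γ) := by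
  by_contra! h
  obtain ⟨L, hL, hnχ⟩ := exists_prov_imp_neg_of_not_setConsistent_insert h.1
  obtain ⟨L', hL', hnnχ⟩ := exists_prov_imp_neg_of_not_setConsistent_insert h.2
  refine hΓ ⟨L ++ L', fun φ hφ => (List.mem_append.mp hφ).elim (hL φ) (hL' φ), ?_⟩
  refine hnχ.taut_mp₂ hnnχ fun v h₁ h₂ => ?_
  revert h₁ h₂
  simp only [propEval_conjList, List.all_append, propEval, neg]
  cases propEval v χ <;> cases L.all (propEval v) <;> cases L'.all (propEval v) <;> simp

theorem SetConsistent.sUnion {c : Set (Set (CLForm N))} (hc : ∀ Γ ∈ c, SetConsistent Γ)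
    (hchain : IsChain (· ⊆ ·) c) (hne : c.Nonempty) : SetConsistent (⋃₀ c) := by
  rintro ⟨L, hL, hbot⟩
  obtain ⟨Γ, hΓc, hLΓ⟩ := hchain.directedOn.exists_mem_subset_of_finite_of_subset_sUnion hne
    L.finite_toSet hL
  exact hc Γ hΓc ⟨L, hLΓ, hbot⟩

theorem SetConsistent.exists_mcs_superset {Γ : Set (CLForm N)} (hΓ : SetConsistent Γ) :
    ∃ Δ, Γ ⊆ Δ ∧ MCS Δ := by
  obtain ⟨Δ, hΓΔ, hmax⟩ := zorn_subset_nonempty {Δ | SetConsistent Δ}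
    (fun c hc hchain hne => ⟨⋃₀ c, .sUnion hc hchain hne, fun _ => Set.subset_sUnion_of_mem⟩)
    Γ hΓ
  refine ⟨Δ, hΓΔ, hmax.1, fun χ => (hmax.1.insert_or_insert_neg χ).imp
    (fun h => hmax.2 h (Set.subset_insert _ _) (Set.mem_insert _ _))
    (fun h => hmax.2 h (Set.subset_insert _ _) (Set.mem_insert _ _))⟩

theorem prov_imp_of_forall_mcs {γ ψ : CLForm N}
    (h : ∀ Δ : Set (CLForm N), MCS Δ → γ ∈ Δ → ψ ∈ Δ) : Prov (imp γ ψ) := by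
  by_contra hγψ
  have hcons : SetConsistent {γ, neg ψ} := by
    rintro ⟨L, hL, hbot⟩
    refine hγψ (hbot.taut_mp fun v hv => ?_)
    have hconj : propEval v γ = true → propEval v ψ = false → propEval v (conjList L) = true :=
      fun hγ hψ => by
        rw [propEval_conjList, List.all_eq_true]
        intro φ hφ
        rcases hL φ hφ with rfl | rfl
        · exact hγ
        · simp [neg, propEval, hψ]
    revert hv hconj
    simp only [propEval]
    cases propEval v γ <;> cases propEval v ψ <;> cases propEval v (conjList L) <;> simp
  obtain ⟨Δ, hsub, hΔ⟩ := hcons.exists_mcs_superset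
  have hψ : ψ ∈ Δ := h Δ hΔ (hsub (by simp))
  exact hΔ.1.not_prov_imp hψ (hsub (by simp)) (Prov.taut (imp ψ ψ) fun v => by simp [propEval])

end CLForm

open CLForm in
theorem canonical_effectivity_truth_general {N : Type} (s : Set (CLForm N)) (hs : MCS s)
    (G : Set N) (ψ : CLForm N) :
    {s' : {Γ : Set (CLForm N) // MCS Γ} | ψ ∈ s'.val} ∈
      {X : Set {Γ : Set (CLForm N) // MCS Γ} | ∃ γ : CLForm N,
        {s' : {Γ : Set (CLForm N) // MCS Γ} | γ ∈ s'.val} ⊆ X ∧ coal G γ ∈ s}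
    ↔ coal G ψ ∈ s := by
  constructor
  · rintro ⟨γ, hγψ, hγ⟩
    have hprov : Prov (imp γ ψ) :=
      prov_imp_of_forall_mcs fun Δ hΔ hγΔ => hγψ (a := ⟨Δ, hΔ⟩) hγΔ
    exact hs.mem_of_prov_imp hγ (hprov.coal_mono G)
  · exact fun h => ⟨ψ, subset_rfl, h⟩

open CLForm in
/-- Canonical-model characterization of `[G]ψ` membership for `G ≠ N`: in the canonical model,
whose states are the maximal consistent sets and where
`E^c(G)(s) = {X | ∃ γ, {s' : ψ ∈ s'} ⊆ X ∧ [G]γ ∈ s}`, we have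
`{s' : ψ ∈ s'} ∈ E^c(G)(s)` iff `[G]ψ ∈ s`. -/
theorem canonical_effectivity_truth {N : Type} (s : Set (CLForm N)) (hs : MCS s)
    (G : Set N) (hG : G ≠ Set.univ) (ψ : CLForm N) :
    {s' : {Γ : Set (CLForm N) // MCS Γ} | ψ ∈ s'.val} ∈
      {X : Set {Γ : Set (CLForm N) // MCS Γ} | ∃ γ : CLForm N,
        {s' : {Γ : Set (CLForm N) // MCS Γ} | γ ∈ s'.val} ⊆ X ∧ coal G γ ∈ s}
    ↔ coal G ψ ∈ s :=
  canonical_effectivity_truth_general s hs G ψ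
end
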